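/- Let d ≥ 1 and let γ, c ∈ ℚ[t] be polynomials of degree exactly d whose leading coefficients a_d, b_d satisfy a_d ≠ 0, b_d ≠ 0, and a_d ≠ b_d. Define the critical orbit sequence a : ℕ → ℚ[t] by a_0 = γ and a_{n+1} = (a_n − γ)² + c, and suppose that a_n is squarefree in ℚ[t] for every n with 1 ≤ n ≤ 16. Then the quadratic polynomial φ_{(γ,c)}(x) = (x − γ)² + c is stable over ℚ(t): for every n ≥ 1, the iterate φ_{(γ,c)}^n is irreducible as a polynomial over the field ℚ(t). -/

import Mathlib

open Polynomial

/-- The `n`-fold iterate `φ^n` of a polynomial under composition (`φ^0 = x`). -/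
noncomputable def polyIter {R : Type*} [CommRing R] (φ : Polynomial R) : ℕ → Polynomial R
  | 0 => Polynomial.X
  | n + 1 => φ.comp (polyIter φ n)

/-!
Write `φ = (X - g)² + c`. For `f` monic irreducible, Capelli's lemma (`Polynomial.irreducible_comp`)
reduces the irreducibility of `f ∘ φ` to that of `(X - g)² + c - β` over `K(β)`, `β` a root of `f`,
i.e. to `β - c` not being a square in `K(β)`. The norm of `β - c` is `(-1)^(deg f) f(c)`, and
`deg φⁿ = 2ⁿ` is even for `n ≥ 1`, so by induction every iterate `φⁿ` is irreducible once `-c` and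
all `φⁿ(c)`, `n ≥ 1`, are non-squares.

Over `ℚ(t)` we have `φⁿ(c) = a_{n+1}`, and as `ℚ[t]` is integrally closed it suffices that
`a_{n+1}` is not a square in `ℚ[t]`. Since the leading coefficients of `γ` and `c` differ,
`deg (c - γ) = d` and hence `deg (a_{n+1} - γ) = 2ⁿ d`. The squarefree nonconstant `-c`, `a₁`, `a₂`
are non-squares, and for `n ≥ 2`, `a_{n+1} = u² + c` with `deg u > deg c` cannot be a square `b²`:
`(b - u)(b + u) = c` would give `deg (2u) ≤ deg c`.
-/

open IntermediateField

section Iterate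

variable {R : Type*} [CommRing R]

theorem polyIter_succ' (φ : R[X]) (n : ℕ) : polyIter φ (n + 1) = (polyIter φ n).comp φ := by
  induction n with
  | zero => simp [polyIter]
  | succ n ih =>
    show φ.comp (polyIter φ (n + 1)) = (φ.comp (polyIter φ n)).comp φ
    rw [ih, comp_assoc]

theorem natDegree_polyIter [IsDomain R] (φ : R[X]) (n : ℕ) :
    (polyIter φ n).natDegree = φ.natDegree ^ n := by
  induction n with
  | zero => simp [polyIter]
  | succ n ih => rw [polyIter_succ', natDegree_comp, ih, pow_succ]

theorem monic_polyIter [Nontrivial R] {φ : R[X]} (hφ : φ.Monic) (hφd : φ.natDegree ≠ 0)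
    (n : ℕ) : (polyIter φ n).Monic := by
  induction n with
  | zero => exact monic_X
  | succ n ih => rw [polyIter_succ']; exact ih.comp hφ hφd

theorem eval_polyIter_X_sub_C_sq_add_C {S : Type*} [CommRing S] (ι : R →+* S) {γ c : R}
    {a : ℕ → R} (h0 : a 0 = γ) (hrec : ∀ n, a (n + 1) = (a n - γ) ^ 2 + c) (n : ℕ) :
    (polyIter ((X - C (ι γ)) ^ 2 + C (ι c)) n).eval (ι c) = ι (a (n + 1)) := by
  induction n with
  | zero => simp [polyIter, hrec 0, h0]
  | succ n ih => simp [polyIter, ih, hrec (n + 1)]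

end Iterate

section Quadratic

variable {K : Type*} [Field K]

theorem natDegree_X_sub_C_sq_add_C (g c : K) : ((X - C g) ^ 2 + C c).natDegree = 2 := by
  simp

theorem monic_X_sub_C_sq_add_C (g c : K) : ((X - C g) ^ 2 + C c).Monic := by
  monicity!

theorem irreducible_X_sub_C_sq_add_C {g c : K} (h : ¬IsSquare (-c)) :
    Irreducible ((X - C g) ^ 2 + C c) := by
  refine irreducible_of_degree_le_three_of_not_isRoot (by simp) fun r hr => h ⟨r - g, ?_⟩
  simp only [IsRoot, eval_add, eval_pow, eval_sub, eval_X, eval_C] at hr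
  linear_combination -hr

theorem IntermediateField.norm_adjoinSimpleGen_sub_algebraMap {E : Type*} [Field E]
    [Algebra K E] {x : E} (hx : IsIntegral K x) (c : K) :
    Algebra.norm K (AdjoinSimple.gen K x - algebraMap K K⟮x⟯ c) =
      (-1) ^ (minpoly K x).natDegree * (minpoly K x).eval c := by
  have := adjoin.finiteDimensional hx
  set w := AdjoinSimple.gen K x - algebraMap K K⟮x⟯ c
  have hw : Algebra.adjoin K {w} = ⊤ := by
    refine eq_top_iff.mpr ((adjoin.powerBasis hx).adjoin_gen_eq_top.symm.le.trans ?_)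
    rw [Algebra.adjoin_le_iff, Set.singleton_subset_iff, adjoin.powerBasis_gen,
      ← sub_add_cancel (AdjoinSimple.gen K x) (algebraMap K K⟮x⟯ c)]
    exact add_mem (Algebra.self_mem_adjoin_singleton K w) (Subalgebra.algebraMap_mem _ c)
  have hminw : minpoly K w = (minpoly K x).comp (X + C c) := by
    rw [minpoly.sub_algebraMap, minpoly_gen]
  have hnorm := Algebra.PowerBasis.norm_gen_eq_coeff_zero_minpoly
    (PowerBasis.ofAdjoinEqTop (.of_finite K w) hw)
  simp only [PowerBasis.ofAdjoinEqTop_gen, PowerBasis.ofAdjoinEqTop_dim, hminw] at hnorm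
  rw [hnorm, natDegree_comp, coeff_zero_eq_eval_zero, eval_comp]
  simp

theorem irreducible_comp_X_sub_C_sq_add_C {f : K[X]} (hf : Irreducible f) (hfm : f.Monic)
    (g c : K) (hns : ¬IsSquare ((-1) ^ f.natDegree * f.eval c)) :
    Irreducible (f.comp ((X - C g) ^ 2 + C c)) := by
  refine irreducible_comp hfm (monic_X_sub_C_sq_add_C g c) hf fun E _ _ x hx => ?_
  have hxint : IsIntegral K x := minpoly.ne_zero_iff.mp (hx ▸ hf.ne_zero)
  have hφ : ((X - C g) ^ 2 + C c).map (algebraMap K K⟮x⟯) - C (AdjoinSimple.gen K x) =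
      (X - C (algebraMap K K⟮x⟯ g)) ^ 2 + C (algebraMap K K⟮x⟯ c - AdjoinSimple.gen K x) := by
    simp only [Polynomial.map_add, Polynomial.map_pow, Polynomial.map_sub, map_X, map_C, C_sub]
    ring
  rw [hφ]
  refine irreducible_X_sub_C_sq_add_C fun hsq => hns ?_
  rw [neg_sub] at hsq
  simpa [norm_adjoinSimpleGen_sub_algebraMap hxint, hx] using hsq.map (Algebra.norm K)

theorem irreducible_polyIter_of_not_isSquare {g c : K} (h₀ : ¬IsSquare (-c))
    (h : ∀ n, 1 ≤ n → ¬IsSquare ((polyIter ((X - C g) ^ 2 + C c) n).eval c)) (n : ℕ) :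
    Irreducible (polyIter ((X - C g) ^ 2 + C c) n) := by
  induction n with
  | zero => exact irreducible_X
  | succ n ih =>
    rw [polyIter_succ']
    refine irreducible_comp_X_sub_C_sq_add_C ih
      (monic_polyIter (monic_X_sub_C_sq_add_C g c) (by simp) n) g c ?_
    rw [natDegree_polyIter, natDegree_X_sub_C_sq_add_C]
    rcases n with _ | n
    · simpa [polyIter] using h₀
    · rw [(Nat.even_pow.mpr ⟨even_two, n.succ_ne_zero⟩).neg_one_pow, one_mul]
      exact h _ n.succ_pos

end Quadratic

theorem Squarefree.not_isSquare {M : Type*} [CommMonoid M] {m : M} (hm : Squarefree m)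
    (hu : ¬IsUnit m) : ¬IsSquare m := by
  rintro ⟨r, rfl⟩
  exact hu ((hm r dvd_rfl).mul (hm r dvd_rfl))

theorem IsIntegrallyClosed.isSquare_of_isSquare_algebraMap {R K : Type*} [CommRing R]
    [IsIntegrallyClosed R] [Field K] [Algebra R K] [IsFractionRing R K] {r : R}
    (h : IsSquare (algebraMap R K r)) : IsSquare r := by
  obtain ⟨s, hs⟩ := h
  obtain ⟨y, rfl⟩ := exists_algebraMap_eq_of_isIntegral_pow (x := s) two_pos
    (by rw [sq, ← hs]; exact isIntegral_algebraMap)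
  exact ⟨y, IsFractionRing.injective R K (by rw [hs, map_mul])⟩

namespace Polynomial

variable {R : Type*} [CommRing R]

theorem natDegree_sub_eq_of_coeff_ne {p q : R[X]} {d : ℕ} (hp : p.natDegree = d)
    (hq : q.natDegree = d) (hne : p.coeff d ≠ q.coeff d) : (p - q).natDegree = d :=
  le_antisymm ((natDegree_sub_le p q).trans (by rw [hp, hq, max_self]))
    (le_natDegree_of_ne_zero (by rwa [coeff_sub, sub_ne_zero]))

variable [IsDomain R]

theorem natDegree_sq_add_of_lt {p q : R[X]} (h : q.natDegree < 2 * p.natDegree) :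
    (p ^ 2 + q).natDegree = 2 * p.natDegree := by
  have hp : (p ^ 2).natDegree = 2 * p.natDegree := natDegree_pow ..
  rw [natDegree_add_eq_left_of_natDegree_lt (hp ▸ h), hp]

theorem natDegree_orbit_sub {γ c : R[X]} (hδ : 0 < (c - γ).natDegree) {a : ℕ → R[X]}
    (h0 : a 0 = γ) (hrec : ∀ n, a (n + 1) = (a n - γ) ^ 2 + c) (n : ℕ) :
    (a (n + 1) - γ).natDegree = 2 ^ n * (c - γ).natDegree := by
  induction n with
  | zero => simp [hrec, h0]
  | succ n ih =>
    have hlt : (c - γ).natDegree < 2 * (2 ^ n * (c - γ).natDegree) := by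
      have := Nat.one_le_two_pow (n := n); nlinarith
    rw [hrec, add_sub_assoc, natDegree_sq_add_of_lt (by rwa [ih]), ih, pow_succ]; ring

theorem not_isSquare_sq_add [NeZero (2 : R)] {u c : R[X]} (hc : c ≠ 0)
    (h : c.natDegree < u.natDegree) : ¬IsSquare (u ^ 2 + c) := by
  rintro ⟨b, hb⟩
  have hfac : (b - u) * (b + u) = c := by linear_combination -hb
  have hsub : b - u ≠ 0 := left_ne_zero_of_mul (hfac ▸ hc)
  have hadd : b + u ≠ 0 := right_ne_zero_of_mul (hfac ▸ hc)
  have hsum : (b - u).natDegree + (b + u).natDegree = c.natDegree := by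
    rw [← natDegree_mul hsub hadd, hfac]
  have h2u : (C 2 * u).natDegree ≤ c.natDegree := by
    rw [show C 2 * u = (b + u) - (b - u) by rw [C_ofNat]; ring]
    exact (natDegree_sub_le _ _).trans (by omega)
  rw [natDegree_C_mul (NeZero.ne 2)] at h2u
  omega

end Polynomial

theorem stmt_14_general (d : ℕ) (hd : 1 ≤ d) (γ c : Polynomial ℚ)
    (hγd : γ.natDegree = d) (hcd : c.natDegree = d)
    (hne : γ.coeff d ≠ c.coeff d)
    (a : ℕ → Polynomial ℚ) (h0 : a 0 = γ)
    (hrec : ∀ n, a (n + 1) = (a n - γ) ^ 2 + c)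
    (hsf : ∀ n, 1 ≤ n → n ≤ 16 → Squarefree (a n)) :
    ∀ n : ℕ, 1 ≤ n →
      Irreducible
        (polyIter
          ((X - C (algebraMap (Polynomial ℚ) (RatFunc ℚ) γ)) ^ 2
            + C (algebraMap (Polynomial ℚ) (RatFunc ℚ) c)) n) := by
  have ha1 : a 1 = c := by rw [hrec, h0, sub_self, zero_pow two_ne_zero, zero_add]
  have hδ : (c - γ).natDegree = d := natDegree_sub_eq_of_coeff_ne hcd hγd hne.symm
  have hdeg := natDegree_orbit_sub (hδ ▸ hd) h0 hrec
  rw [hδ] at hdeg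
  have hsfc : Squarefree c := ha1 ▸ hsf 1 le_rfl (by norm_num)
  have not_isSquare_of_squarefree (p : ℚ[X]) (hp : Squarefree p) (hpos : 0 < p.natDegree) :
      ¬IsSquare p := hp.not_isSquare (not_isUnit_of_natDegree_pos p hpos)
  have hsq : ∀ n, 1 ≤ n → ¬IsSquare (a n) := by
    rintro (_ | _ | _ | n) hn
    · omega
    · exact ha1 ▸ not_isSquare_of_squarefree c hsfc (by omega)
    · refine not_isSquare_of_squarefree _ (hsf 2 (by norm_num) (by norm_num)) ?_
      rw [hrec, natDegree_sq_add_of_lt (by rw [hdeg 0, hcd]; omega), hdeg 0]; omega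
    · rw [hrec]
      refine not_isSquare_sq_add (ne_zero_of_natDegree_gt (n := 0) (by omega)) ?_
      have := Nat.one_le_two_pow (n := n)
      rw [hdeg, hcd, pow_succ]; nlinarith
  refine fun n _ => irreducible_polyIter_of_not_isSquare ?_ (fun n hn => ?_) n
  · rw [← map_neg]
    exact mt IsIntegrallyClosed.isSquare_of_isSquare_algebraMap <|
      not_isSquare_of_squarefree _ ((Associated.refl c).neg_right.squarefree_iff.mp hsfc)
        (by rw [natDegree_neg]; omega)
  · rw [eval_polyIter_X_sub_C_sq_add_C _ h0 hrec]
    exact mt IsIntegrallyClosed.isSquare_of_isSquare_algebraMap (hsq _ (by omega))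

/-- If `γ, c ∈ ℚ[t]` have degree exactly `d ≥ 1` with leading coefficients
`a_d ≠ 0`, `b_d ≠ 0`, `a_d ≠ b_d`, and the critical orbit `a₀ = γ`, `a_{n+1} = (a_n - γ)² + c`
is squarefree for `1 ≤ n ≤ 16`, then `φ_{(γ,c)}(x) = (x - γ)² + c` is stable over `ℚ(t)`:
every iterate `φ_{(γ,c)}^n` (`n ≥ 1`) is irreducible over `ℚ(t)`. -/
theorem stmt_14 (d : ℕ) (hd : 1 ≤ d) (γ c : Polynomial ℚ)
    (hγd : γ.natDegree = d) (hcd : c.natDegree = d)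
    (hγ0 : γ.coeff d ≠ 0) (hc0 : c.coeff d ≠ 0) (hne : γ.coeff d ≠ c.coeff d)
    (a : ℕ → Polynomial ℚ) (h0 : a 0 = γ)
    (hrec : ∀ n, a (n + 1) = (a n - γ) ^ 2 + c)
    (hsf : ∀ n, 1 ≤ n → n ≤ 16 → Squarefree (a n)) :
    ∀ n : ℕ, 1 ≤ n →
      Irreducible
        (polyIter
          ((X - C (algebraMap (Polynomial ℚ) (RatFunc ℚ) γ)) ^ 2
            + C (algebraMap (Polynomial ℚ) (RatFunc ℚ) c)) n) :=
  stmt_14_general d hd γ c hγd hcd hne a h0 hrec hsf
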